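/- arXiv:1801.07095 — 5 statements merged into one kernel-verified Lean document; each statement's English description precedes it below -/
import Mathlib

section
/- Let ψ : ℝ → ℝ be continuous with ψ(p) = 0 for p ≤ P₀, ψ(p) = 1 for p ≥ P₁ (with P₀ < P₁), and ψ continuously differentiable on (P₀,P₁) with ψ'(p) = 1/(η γ(p)) there, where η = ∫_{P₀}^{P₁} dp/γ(p) and γ is smooth and positive. Then for every C² compactly supported function v : ℝ → ℝ, ∫_ℝ v(p) (ν² ψ''(p) - (H'(p) - σ) ψ'(p)) dp interpreted distributionally equals α₋ v(P₀) - α₊ v(P₁), i.e. ∫_ℝ (ν² v''(p) + ((H'(p) - σ) v(p))' ) ψ(p) dp = α₋ v(P₀) - α₊ v(P₁), where α₋ = ν²/(η γ(P₀)), α₊ = ν²/(η γ(P₁)), and γ(p) = exp((-H(p)+σp)/ν²). -/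
open MeasureTheory intervalIntegral Set

/-! With `F := ν² v' + (H' - σ) v` the integrand is `F' ψ`. As `ψ` is constant off `[P₀, P₁]`,
integrating by parts leaves `-∫_{P₀}^{P₁} F ψ'` with `ψ' = 1 / (η γ)`. Since
`1 / γ = exp ((H - σ p) / ν²)` is an integrating factor, `F / γ = ν² (v / γ)'`, and the remaining
integral is `(ν² / η) (v(P₁) / γ(P₁) - v(P₀) / γ(P₀))`. -/

theorem integral_deriv_mul_eq_neg_intervalIntegral_mul_deriv {F ψ ψ' : ℝ → ℝ} {a b : ℝ}
    (hab : a ≤ b) (hF : ContDiff ℝ 1 F) (hFs : HasCompactSupport F)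
    (hψa : ∀ x ≤ a, ψ x = 0) (hψb : ∀ x, b ≤ x → ψ x = 1)
    (hψc : ContinuousOn ψ (Icc a b)) (hψd : ∀ x ∈ Ioo a b, HasDerivAt ψ (ψ' x) x)
    (hψ'i : IntervalIntegrable ψ' volume a b) :
    ∫ x, deriv F x * ψ x = -∫ x in a..b, F x * ψ' x := by
  have hF' : Continuous (deriv F) := hF.continuous_deriv le_rfl
  have hFd : ∀ x, HasDerivAt F (deriv F x) x :=
    fun x => (hF.differentiable one_ne_zero x).hasDerivAt
  have hF'i : Integrable (deriv F) := hF'.integrable_of_hasCompactSupport hFs.deriv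
  have hleft : EqOn (fun x => deriv F x * ψ x) 0 (Iic a) := fun x hx => by
    simp [hψa x hx]
  have hright : EqOn (fun x => deriv F x * ψ x) (deriv F) (Ioi b) := fun x hx => by
    simp [hψb x (le_of_lt hx)]
  have hmid : IntegrableOn (fun x => deriv F x * ψ x) (Ioc a b) :=
    ((hF'.continuousOn.mul hψc).integrableOn_Icc).mono_set Ioc_subset_Icc_self
  have hIoi : IntegrableOn (fun x => deriv F x * ψ x) (Ioi b) :=
    hF'i.integrableOn.congr_fun hright.symm measurableSet_Ioi
  have htail : ∫ x in Ioi b, deriv F x = -F b := by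
    simpa using integral_Ioi_of_hasDerivAt_of_tendsto hF.continuous.continuousWithinAt
      (fun x _ => hFd x) hF'i.integrableOn
      (hFs.is_zero_at_infty.mono_left (le_sup_right.trans atBot_atTop_le_cocompact))
  have hparts : ∫ x in a..b, deriv F x * ψ x = F b - ∫ x in a..b, F x * ψ' x := by
    have := integral_mul_deriv_eq_deriv_mul_of_hasDerivAt (u := ψ) (v := F) (u' := ψ')
      (v' := deriv F) (by rwa [uIcc_of_le hab]) hF.continuous.continuousOn
      (by simpa [hab] using hψd) (fun x _ => hFd x) hψ'i (hF'.intervalIntegrable a b)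
    simp only [hψa a le_rfl, hψb b le_rfl] at this
    simpa [mul_comm] using this
  rw [← integral_Iic_add_Ioi (b := a) ((integrableOn_zero).congr_fun hleft.symm measurableSet_Iic)
      (by rw [← Ioc_union_Ioi_eq_Ioi hab]; exact hmid.union hIoi),
    setIntegral_congr_fun measurableSet_Iic hleft, ← Ioc_union_Ioi_eq_Ioi hab,
    setIntegral_union (Ioc_disjoint_Ioi le_rfl) measurableSet_Ioi hmid hIoi,
    setIntegral_congr_fun measurableSet_Ioi hright, htail, ← integral_of_le hab, hparts]
  simp only [Pi.zero_apply, integral_zero, zero_add]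
  ring

theorem integral_deriv_add_mul_mul_exp {v φ φ' : ℝ → ℝ} (a b : ℝ) (hv : ContDiff ℝ 1 v)
    (hφ : ∀ x, HasDerivAt φ (φ' x) x) (hφ' : Continuous φ') :
    ∫ x in a..b, (deriv v x + φ' x * v x) * Real.exp (φ x)
      = v b * Real.exp (φ b) - v a * Real.exp (φ a) := by
  have hφc : Continuous φ := continuous_iff_continuousAt.mpr fun x => (hφ x).continuousAt
  have hv' : Continuous (deriv v) := hv.continuous_deriv le_rfl
  refine integral_eq_sub_of_hasDerivAt (f := fun x => v x * Real.exp (φ x)) (fun x _ => ?_)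
    (((hv'.add (hφ'.mul hv.continuous)).mul (Real.continuous_exp.comp hφc)).intervalIntegrable a b)
  exact ((hv.differentiable one_ne_zero x).hasDerivAt.mul (hφ x).exp).congr_deriv (by ring)

section Primitive

variable {ψ f : ℝ → ℝ} {a b c : ℝ}

theorem continuousOn_Icc_of_eq_const_mul_integral (hf : Continuous f)
    (hψ : ∀ x, a ≤ x → x ≤ b → ψ x = c * ∫ t in a..x, f t) : ContinuousOn ψ (Icc a b) :=
  (continuous_const.mul (continuous_primitive (fun a b => hf.intervalIntegrable a b) a)
    ).continuousOn.congr fun x hx => hψ x hx.1 hx.2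

theorem hasDerivAt_of_eq_const_mul_integral (hf : Continuous f)
    (hψ : ∀ x, a ≤ x → x ≤ b → ψ x = c * ∫ t in a..x, f t) {x : ℝ} (hx : x ∈ Ioo a b) :
    HasDerivAt ψ (c * f x) x :=
  ((integral_hasDerivAt_right (hf.intervalIntegrable _ _)
    hf.aestronglyMeasurable.stronglyMeasurableAtFilter hf.continuousAt).const_mul c
    ).congr_of_eventuallyEq (by
      filter_upwards [Ioo_mem_nhds hx.1 hx.2] with y hy using hψ y hy.1.le hy.2.le)

end Primitive

section Flux

variable {v b : ℝ → ℝ} (c : ℝ)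

theorem contDiff_const_mul_deriv_add_mul (hv : ContDiff ℝ 2 v) (hb : ContDiff ℝ 1 b) :
    ContDiff ℝ 1 fun p => c * deriv v p + b p * v p :=
  (contDiff_const.mul hv.deriv').add (hb.mul (hv.of_le one_le_two))

theorem deriv_const_mul_deriv_add_mul (hv : ContDiff ℝ 2 v) (hb : ContDiff ℝ 1 b) (p : ℝ) :
    deriv (fun q => c * deriv v q + b q * v q) p
      = c * deriv (deriv v) p + deriv (fun q => b q * v q) p :=
  (((hv.deriv'.differentiable one_ne_zero p).hasDerivAt.const_mul c).add
    (hb.mul (hv.of_le one_le_two) |>.differentiable one_ne_zero p).hasDerivAt).deriv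

end Flux

theorem stmt_7_general (H : ℝ → ℝ) (hH : ContDiff ℝ 2 H) (σ ν P₀ P₁ : ℝ)
    (hν : 0 < ν) (hP : P₀ < P₁)
    (γ : ℝ → ℝ) (hγ : ∀ p, γ p = Real.exp ((-H p + σ * p) / ν ^ 2))
    (η : ℝ)
    (ψ : ℝ → ℝ)
    (hψ₀ : ∀ p, p ≤ P₀ → ψ p = 0)
    (hψ₁ : ∀ p, P₁ ≤ p → ψ p = 1)
    (hψmid : ∀ p, P₀ ≤ p → p ≤ P₁ → ψ p = η⁻¹ * ∫ q in P₀..p, (γ q)⁻¹)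
    (αm αp : ℝ) (hαm : αm = ν ^ 2 / (η * γ P₀)) (hαp : αp = ν ^ 2 / (η * γ P₁)) :
    ∀ v : ℝ → ℝ, ContDiff ℝ 2 v → HasCompactSupport v →
      (∫ p : ℝ, (ν ^ 2 * deriv (deriv v) p
          + deriv (fun q => (deriv H q - σ) * v q) p) * ψ p)
        = αm * v P₀ - αp * v P₁ := by
  intro v hv hvs
  have hν2 : ν ^ 2 ≠ 0 := pow_ne_zero 2 hν.ne'
  set φ : ℝ → ℝ := fun p => (H p - σ * p) / ν ^ 2
  have hγφ : ∀ p, (γ p)⁻¹ = Real.exp (φ p) := fun p => by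
    rw [hγ, ← Real.exp_neg]; congr 1; simp only [φ]; ring
  have hφ : ∀ p, HasDerivAt φ ((deriv H p - σ) / ν ^ 2) p := fun p => by
    simpa using (((hH.differentiable two_ne_zero) p).hasDerivAt.sub
      ((hasDerivAt_id p).const_mul σ)).div_const (ν ^ 2)
  have hexp : Continuous fun p => Real.exp (φ p) := by fun_prop
  simp_rw [hγφ] at hψmid
  have hdrift : ContDiff ℝ 1 fun p => deriv H p - σ := hH.deriv'.sub contDiff_const
  set F : ℝ → ℝ := fun p => ν ^ 2 * deriv v p + (deriv H p - σ) * v p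
  have hdF : ∀ p, deriv F p = ν ^ 2 * deriv (deriv v) p
      + deriv (fun q => (deriv H q - σ) * v q) p :=
    deriv_const_mul_deriv_add_mul (ν ^ 2) hv hdrift
  simp_rw [← hdF]
  rw [integral_deriv_mul_eq_neg_intervalIntegral_mul_deriv (F := F) hP.le
    (contDiff_const_mul_deriv_add_mul _ hv hdrift) (hvs.deriv.mul_left.add hvs.mul_left) hψ₀ hψ₁
    (continuousOn_Icc_of_eq_const_mul_integral hexp hψmid)
    (fun p => hasDerivAt_of_eq_const_mul_integral hexp hψmid)
    ((continuous_const.mul hexp).intervalIntegrable _ _)]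
  have hFexp : ∀ p, F p * (η⁻¹ * Real.exp (φ p))
      = η⁻¹ * ν ^ 2 * ((deriv v p + (deriv H p - σ) / ν ^ 2 * v p) * Real.exp (φ p)) := by
    intro p; simp only [F]; field_simp
  simp_rw [hFexp, intervalIntegral.integral_const_mul]
  rw [integral_deriv_add_mul_mul_exp P₀ P₁ (hv.of_le one_le_two) hφ
    (hdrift.continuous.div_const _), hαm, hαp, div_eq_mul_inv, div_eq_mul_inv, mul_inv, mul_inv,
    hγφ, hγφ]
  ring

theorem stmt_7 (H : ℝ → ℝ) (hH : ContDiff ℝ 2 H) (σ ν P₀ P₁ : ℝ)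
    (hν : 0 < ν) (hP : P₀ < P₁)
    (γ : ℝ → ℝ) (hγ : ∀ p, γ p = Real.exp ((-H p + σ * p) / ν ^ 2))
    (η : ℝ) (hη : η = ∫ p in P₀..P₁, (γ p)⁻¹)
    (ψ : ℝ → ℝ)
    (hψ₀ : ∀ p, p ≤ P₀ → ψ p = 0)
    (hψ₁ : ∀ p, P₁ ≤ p → ψ p = 1)
    (hψmid : ∀ p, P₀ ≤ p → p ≤ P₁ → ψ p = η⁻¹ * ∫ q in P₀..p, (γ q)⁻¹)
    (αm αp : ℝ) (hαm : αm = ν ^ 2 / (η * γ P₀)) (hαp : αp = ν ^ 2 / (η * γ P₁)) :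
    ∀ v : ℝ → ℝ, ContDiff ℝ 2 v → HasCompactSupport v →
      (∫ p : ℝ, (ν ^ 2 * deriv (deriv v) p
          + deriv (fun q => (deriv H q - σ) * v q) p) * ψ p)
        = αm * v P₀ - αp * v P₁ :=
  stmt_7_general H hH σ ν P₀ P₁ hν hP γ hγ η ψ hψ₀ hψ₁ hψmid αm αp hαm hαp
end

section
/- Let γ(p) = exp(-H(p)/ν²) with H : ℝ → ℝ smooth, H(P₀) = min H on [a,b] attained only at the interior point P₀ with H''(P₀) > 0, and suppose H(p) - H(P₀) ≥ c(p - P₀)² on [a,b] for some c > 0. Then for the normalized density γ̄ = γ / ∫_a^b γ and any interval I = [P₀ - r, P₀ + r] ⊂ [a,b] with r > 0 fixed, ∫_{[a,b] \ I} γ̄(p) dp ≤ C exp(-c r²/ν²) / ν for some constant C independent of ν, for all sufficiently small ν > 0. -/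
open MeasureTheory Set intervalIntegral

theorem stmt_8 (a b P₀ r c : ℝ) (hab : a < b) (hP₀ : P₀ ∈ Ioo a b)
    (hr : 0 < r) (hI : Icc (P₀ - r) (P₀ + r) ⊆ Icc a b) (hc : 0 < c)
    (H : ℝ → ℝ) (hH : ContDiff ℝ (⊤ : ℕ∞) H)
    (hmin : ∀ p ∈ Icc a b, p ≠ P₀ → H P₀ < H p)
    (hH'' : 0 < deriv (deriv H) P₀)
    (hquad : ∀ p ∈ Icc a b, c * (p - P₀) ^ 2 ≤ H p - H P₀) :
    ∃ C : ℝ, ∃ ν₀ > 0, ∀ ν : ℝ, 0 < ν → ν < ν₀ →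
      (∫ p in (Icc a b \ Icc (P₀ - r) (P₀ + r)),
          Real.exp (-H p / ν ^ 2) / (∫ q in a..b, Real.exp (-H q / ν ^ 2)))
        ≤ C * Real.exp (-c * r ^ 2 / ν ^ 2) / ν := by
  -- basic smoothness facts
  have hHs : ContDiff ℝ ((⊤ : ℕ∞) : WithTop ℕ∞) H := hH.of_le (by simp)
  have hH1 : Differentiable ℝ H := hHs.differentiable (by simp)
  have hHd : ContDiff ℝ ((⊤ : ℕ∞) : WithTop ℕ∞) (deriv H) := (contDiff_infty_iff_deriv.mp hHs).2
  have hHd1 : Differentiable ℝ (deriv H) := hHd.differentiable (by simp)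
  have hHdd : Continuous (deriv (deriv H)) :=
    ((contDiff_infty_iff_deriv.mp hHd).2).continuous
  -- bound on second derivative
  obtain ⟨K₀, hK₀⟩ := isCompact_Icc.exists_bound_of_continuousOn
    (s := Icc a b) hHdd.continuousOn
  set K : ℝ := max K₀ 1 with hKdef
  have hK1 : (1 : ℝ) ≤ K := le_max_right _ _
  have hK0 : 0 < K := lt_of_lt_of_le one_pos hK1
  have hK : ∀ x ∈ Icc a b, |deriv (deriv H) x| ≤ K := fun x hx =>
    le_trans (hK₀ x hx) (le_max_left _ _)
  -- derivative vanishes at P₀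
  have hd0 : deriv H P₀ = 0 := by
    have hloc : IsLocalMin H P₀ := by
      have hmem : Icc a b ∈ nhds P₀ := Icc_mem_nhds hP₀.1 hP₀.2
      filter_upwards [hmem] with p hp
      by_cases h : p = P₀
      · simp [h]
      · exact (hmin p hp h).le
    exact hloc.deriv_eq_zero
  -- Lipschitz bound for deriv H on Icc a b
  have hlip : ∀ x ∈ Icc a b, |deriv H x| ≤ K * |x - P₀| := by
    intro x hx
    have hP₀' : P₀ ∈ Icc a b := Ioo_subset_Icc_self hP₀
    have := (convex_Icc a b).norm_image_sub_le_of_norm_deriv_le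
      (f := deriv H) (fun y hy => hHd1 y) hK hP₀' hx
    simpa [hd0, Real.norm_eq_abs] using this
  -- quadratic upper bound on H
  have hquadU : ∀ p ∈ Icc a b, H p - H P₀ ≤ K * (p - P₀) ^ 2 := by
    intro p hp
    have hP₀' : P₀ ∈ Icc a b := Ioo_subset_Icc_self hP₀
    have hsub : uIcc P₀ p ⊆ Icc a b := uIcc_subset_Icc hP₀' hp
    have hb1 : ∀ x ∈ uIcc P₀ p, ‖deriv H x‖ ≤ K * |p - P₀| := by
      intro x hx
      have hxab := hsub hx
      have hx' : |x - P₀| ≤ |p - P₀| := by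
        rcases le_total P₀ p with h | h
        · rw [uIcc_of_le h] at hx
          rw [abs_of_nonneg (by linarith [hx.1]), abs_of_nonneg (by linarith)]
          linarith [hx.2]
        · rw [uIcc_of_ge h] at hx
          rw [abs_of_nonpos (by linarith [hx.2]), abs_of_nonpos (by linarith)]
          linarith [hx.1]
      calc ‖deriv H x‖ = |deriv H x| := rfl
        _ ≤ K * |x - P₀| := hlip x hxab
        _ ≤ K * |p - P₀| := by
            exact mul_le_mul_of_nonneg_left hx' hK0.le
    have := (convex_uIcc P₀ p).norm_image_sub_le_of_norm_deriv_le
      (f := H) (fun y hy => hH1 y) hb1 left_mem_uIcc right_mem_uIcc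
    have h2 : |H p - H P₀| ≤ K * |p - P₀| * |p - P₀| := by
      simpa [Real.norm_eq_abs] using this
    calc H p - H P₀ ≤ |H p - H P₀| := le_abs_self _
      _ ≤ K * |p - P₀| * |p - P₀| := h2
      _ = K * (p - P₀) ^ 2 := by rw [mul_assoc, abs_mul_abs_self]; ring
  -- choose constants
  refine ⟨(b - a) * Real.exp K / 2, min (P₀ - a) (b - P₀), by
    simp only [lt_min_iff]; constructor <;> linarith [hP₀.1, hP₀.2], ?_⟩
  intro ν hν hνlt
  have hνa : ν < P₀ - a := lt_of_lt_of_le hνlt (min_le_left _ _)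
  have hνb : ν < b - P₀ := lt_of_lt_of_le hνlt (min_le_right _ _)
  have hν2 : (0:ℝ) < ν ^ 2 := by positivity
  set f : ℝ → ℝ := fun p => Real.exp (-H p / ν ^ 2) with hf
  have hfc : Continuous f := by
    exact Real.continuous_exp.comp ((hH.continuous.neg).div_const _)
  have hfpos : ∀ p, 0 < f p := fun p => Real.exp_pos _
  -- lower bound on denominator
  have hsubν : Icc (P₀ - ν) (P₀ + ν) ⊆ Icc a b := by
    intro x hx
    exact ⟨by linarith [hx.1], by linarith [hx.2]⟩
  have hD1 : (∫ q in (P₀ - ν)..(P₀ + ν), f q) ≤ ∫ q in a..b, f q := by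
    apply intervalIntegral.integral_mono_interval (by linarith) (by linarith) (by linarith)
    · exact Filter.Eventually.of_forall fun x => (hfpos x).le
    · exact hfc.intervalIntegrable a b
  have hD2 : 2 * ν * Real.exp (-H P₀ / ν ^ 2 - K) ≤ ∫ q in (P₀ - ν)..(P₀ + ν), f q := by
    have hmono : ∀ q ∈ Icc (P₀ - ν) (P₀ + ν),
        Real.exp (-H P₀ / ν ^ 2 - K) ≤ f q := by
      intro q hq
      have hqab : q ∈ Icc a b := hsubν hq
      have h1 : H q - H P₀ ≤ K * (q - P₀) ^ 2 := hquadU q hqab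
      have h2 : (q - P₀) ^ 2 ≤ ν ^ 2 := by
        have := hq.1; have := hq.2; nlinarith
      have h3 : H q ≤ H P₀ + K * ν ^ 2 := by nlinarith
      apply Real.exp_le_exp.mpr
      rw [div_sub' hν2.ne', div_le_div_iff₀ hν2 hν2]
      nlinarith
    calc 2 * ν * Real.exp (-H P₀ / ν ^ 2 - K)
        = ∫ _ in (P₀ - ν)..(P₀ + ν), Real.exp (-H P₀ / ν ^ 2 - K) := by
          rw [intervalIntegral.integral_const, smul_eq_mul]; ring_nf
      _ ≤ ∫ q in (P₀ - ν)..(P₀ + ν), f q := by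
          apply intervalIntegral.integral_mono_on (by linarith)
            (intervalIntegrable_const) (hfc.intervalIntegrable _ _) hmono
  have hDpos : 0 < ∫ q in a..b, f q :=
    lt_of_lt_of_le (by positivity) (le_trans hD2 hD1)
  set D : ℝ := ∫ q in a..b, f q with hD
  set s : Set ℝ := Icc a b \ Icc (P₀ - r) (P₀ + r) with hs
  -- upper bound on numerator
  have hupper : ∀ p ∈ s, f p ≤ Real.exp (-(H P₀ + c * r ^ 2) / ν ^ 2) := by
    intro p hp
    obtain ⟨hp1, hp2⟩ := hp
    have hpr : r ^ 2 ≤ (p - P₀) ^ 2 := by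
      rw [mem_Icc, not_and_or, not_le, not_le] at hp2
      rcases hp2 with h | h <;> nlinarith
    have h1 : c * (p - P₀) ^ 2 ≤ H p - H P₀ := hquad p hp1
    have h2 : H P₀ + c * r ^ 2 ≤ H p := by nlinarith
    apply Real.exp_le_exp.mpr
    apply div_le_div_of_nonneg_right _ hν2.le
    linarith
  have hsmeas : MeasurableSet s := measurableSet_Icc.diff measurableSet_Icc
  have hsint : IntegrableOn f s :=
    (hfc.integrableOn_Icc (a := a) (b := b)).mono_set diff_subset
  have hN : (∫ p in s, f p) ≤ (b - a) * Real.exp (-(H P₀ + c * r ^ 2) / ν ^ 2) := by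
    calc (∫ p in s, f p)
        ≤ ∫ _ in s, Real.exp (-(H P₀ + c * r ^ 2) / ν ^ 2) :=
          setIntegral_mono_on hsint ((integrableOn_const_iff (by simp)).mpr
            (Or.inr (lt_of_le_of_lt (measure_mono (diff_subset.trans subset_rfl))
              (by rw [Real.volume_Icc]; exact ENNReal.ofReal_lt_top)))) hsmeas hupper
      _ = (volume s).toReal * Real.exp (-(H P₀ + c * r ^ 2) / ν ^ 2) := by
          rw [setIntegral_const, smul_eq_mul]; rfl
      _ ≤ (b - a) * Real.exp (-(H P₀ + c * r ^ 2) / ν ^ 2) := by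
          apply mul_le_mul_of_nonneg_right _ (Real.exp_pos _).le
          have h1 : volume s ≤ volume (Icc a b) := measure_mono diff_subset
          have h2 : (volume s).toReal ≤ (volume (Icc a b)).toReal :=
            ENNReal.toReal_mono (by rw [Real.volume_Icc]; exact ENNReal.ofReal_ne_top) h1
          rw [Real.volume_Icc, ENNReal.toReal_ofReal (by linarith)] at h2
          exact h2
  -- combine
  have hLHS : (∫ p in s, f p / D) = (∫ p in s, f p) / D := integral_div D _
  rw [show (∫ p in (Icc a b \ Icc (P₀ - r) (P₀ + r)),
      Real.exp (-H p / ν ^ 2) / (∫ q in a..b, Real.exp (-H q / ν ^ 2)))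
      = (∫ p in s, f p) / D from hLHS]
  have hDlow : 2 * ν * Real.exp (-H P₀ / ν ^ 2 - K) ≤ D := le_trans hD2 hD1
  have hstep : (∫ p in s, f p) / D ≤
      ((b - a) * Real.exp (-(H P₀ + c * r ^ 2) / ν ^ 2)) /
        (2 * ν * Real.exp (-H P₀ / ν ^ 2 - K)) := by
    apply div_le_div₀ (mul_nonneg (by linarith) (Real.exp_pos _).le) hN (by positivity) hDlow
  refine le_trans hstep (le_of_eq ?_)
  rw [show (-(H P₀ + c * r ^ 2) / ν ^ 2) = (-H P₀ / ν ^ 2 - K) + (K + -c * r ^ 2 / ν ^ 2) by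
    field_simp; ring, Real.exp_add, Real.exp_add]
  field_simp [Real.exp_ne_zero, hν.ne']
end

section
/- Let H : ℝ → ℝ be C² with H''(P₀) = 2a > 0 at an interior minimum P₀ of [α,β] where H(P₀) = 0 and H > 0 on [α,β]\{P₀}. Then the Laplace asymptotics hold: ν^{-1} ∫_α^β exp(-H(p)/ν²) dp converges to √(π/a) = √(2π/H''(P₀)) as ν → 0⁺. -/
/-!
Substituting `p = P₀ + ν t` turns `ν⁻¹ ∫_α^β exp(-H p / ν²) dp` into the integral over the
expanding window `((α - P₀)/ν, (β - P₀)/ν]` of `exp(-H(P₀ + ν t) / ν²)`. By Taylor's theorem this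
integrand tends to `exp(-H''(P₀) t² / 2)`, and it is dominated by `exp(-c t²)` because
`H p ≥ c (p - P₀)²` on `[α, β]` (Taylor near `P₀`, compactness away from it). Dominated convergence
and the Gaussian integral give the limit `√(2π / H''(P₀))`.
-/

open MeasureTheory Set intervalIntegral Filter Topology

open Asymptotics in
theorem ContDiff.isLittleO_sub_taylor_two {f : ℝ → ℝ} (hf : ContDiff ℝ 2 f) (x₀ : ℝ) :
    (fun x => f x - (f x₀ + deriv f x₀ * (x - x₀) + deriv (deriv f) x₀ / 2 * (x - x₀) ^ 2))
      =o[𝓝 x₀] fun x => (x - x₀) ^ 2 := by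
  refine (taylor_isLittleO_univ (n := 2) (x₀ := x₀) (by exact_mod_cast hf)).congr_left
    fun x => ?_
  simp only [taylorWithinEval_succ, taylor_within_zero_eval, iteratedDerivWithin_univ,
    iteratedDeriv_succ, iteratedDeriv_zero, smul_eq_mul]
  norm_num
  ring

theorem ContDiff.eventually_add_mul_sq_le {f : ℝ → ℝ} (hf : ContDiff ℝ 2 f) {x₀ : ℝ}
    (hcrit : deriv f x₀ = 0) (hf'' : 0 < deriv (deriv f) x₀) :
    ∀ᶠ x in 𝓝 x₀, f x₀ + deriv (deriv f) x₀ / 4 * (x - x₀) ^ 2 ≤ f x := by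
  filter_upwards [(hf.isLittleO_sub_taylor_two x₀).def (by positivity : 0 < deriv (deriv f) x₀ / 4)]
    with x hx
  rw [hcrit, Real.norm_eq_abs, Real.norm_of_nonneg (sq_nonneg _)] at hx
  linarith [neg_le_of_abs_le hx]

theorem ContDiff.tendsto_sub_div_sq {f : ℝ → ℝ} (hf : ContDiff ℝ 2 f) {x₀ : ℝ}
    (hcrit : deriv f x₀ = 0) (t : ℝ) :
    Tendsto (fun ν => (f (x₀ + ν * t) - f x₀) / ν ^ 2) (𝓝[≠] 0)
      (𝓝 (deriv (deriv f) x₀ / 2 * t ^ 2)) := by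
  have hline : Tendsto (fun ν : ℝ => x₀ + ν * t) (𝓝 0) (𝓝 x₀) := by
    simpa using ((tendsto_id (x := 𝓝 (0 : ℝ))).mul_const t).const_add x₀
  have hsq : (fun ν : ℝ => (x₀ + ν * t - x₀) ^ 2) =O[𝓝 0] fun ν => ν ^ 2 :=
    Asymptotics.IsBigO.of_bound (t ^ 2) (Eventually.of_forall fun ν => by
      simp only [add_sub_cancel_left, Real.norm_eq_abs, abs_pow, abs_mul, mul_pow]
      rw [mul_comm, sq_abs, sq_abs])
  have hrem := (((hf.isLittleO_sub_taylor_two x₀).comp_tendsto hline).trans_isBigO hsq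
    ).tendsto_div_nhds_zero
  have hlim := (hrem.mono_left (nhdsWithin_le_nhds (s := {0}ᶜ))).add_const
    (deriv (deriv f) x₀ / 2 * t ^ 2)
  rw [zero_add] at hlim
  refine hlim.congr' ?_
  filter_upwards [self_mem_nhdsWithin] with ν (hν : ν ≠ 0)
  simp only [Function.comp_apply, hcrit]
  field_simp
  ring

theorem exists_pos_mul_sq_le_on_Icc {f : ℝ → ℝ} {a b x₀ c₀ : ℝ} (hab : a < b)
    (hx₀ : x₀ ∈ Icc a b) (hf : ContinuousOn f (Icc a b))
    (hpos : ∀ x ∈ Icc a b, x ≠ x₀ → 0 < f x) (hc₀ : 0 < c₀)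
    (hloc : ∀ᶠ x in 𝓝 x₀, c₀ * (x - x₀) ^ 2 ≤ f x) :
    ∃ c > 0, ∀ x ∈ Icc a b, c * (x - x₀) ^ 2 ≤ f x := by
  obtain ⟨δ, hδ, hball⟩ := Metric.eventually_nhds_iff_ball.mp hloc
  have hK : IsCompact (Icc a b \ Metric.ball x₀ δ) := isCompact_Icc.diff Metric.isOpen_ball
  obtain ⟨m, hm, hmK⟩ := hK.exists_forall_le' (hf.mono sdiff_subset) (a := 0)
    fun x hx => hpos x hx.1 fun h => hx.2 (h ▸ Metric.mem_ball_self hδ)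
  have hba : 0 < (b - a) ^ 2 := by nlinarith
  refine ⟨min c₀ (m / (b - a) ^ 2), lt_min hc₀ (by positivity), fun x hx => ?_⟩
  by_cases hxδ : x ∈ Metric.ball x₀ δ
  · exact (mul_le_mul_of_nonneg_right (min_le_left _ _) (sq_nonneg _)).trans (hball x hxδ)
  · have hdist : (x - x₀) ^ 2 ≤ (b - a) ^ 2 := by
      rw [sq_le_sq, abs_le, abs_of_pos (by linarith)]
      constructor <;> linarith [hx.1, hx.2, hx₀.1, hx₀.2]
    calc min c₀ (m / (b - a) ^ 2) * (x - x₀) ^ 2 ≤ m / (b - a) ^ 2 * (b - a) ^ 2 :=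
          mul_le_mul (min_le_right _ _) hdist (sq_nonneg _) (by positivity)
      _ = m := div_mul_cancel₀ m hba.ne'
      _ ≤ f x := hmK x ⟨hx, hxδ⟩

theorem mem_Ioc_sub_div_iff {a b x₀ ν t : ℝ} (hν : 0 < ν) :
    t ∈ Ioc ((a - x₀) / ν) ((b - x₀) / ν) ↔ x₀ + ν * t ∈ Ioc a b := by
  simp only [mem_Ioc, div_lt_iff₀ hν, le_div_iff₀ hν]
  constructor <;> rintro ⟨h, h'⟩ <;> constructor <;> linarith

theorem inv_mul_intervalIntegral_eq_integral_indicator (g : ℝ → ℝ) {a b x₀ ν : ℝ} (hab : a ≤ b)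
    (hν : 0 < ν) :
    ν⁻¹ * ∫ x in a..b, g x =
      ∫ t, (Ioc ((a - x₀) / ν) ((b - x₀) / ν)).indicator (fun t => g (x₀ + ν * t)) t := by
  rw [MeasureTheory.integral_indicator measurableSet_Ioc,
    ← intervalIntegral.integral_of_le (div_le_div_of_nonneg_right (by linarith) hν.le),
    intervalIntegral.integral_comp_add_mul _ hν.ne', mul_div_cancel₀ _ hν.ne',
    mul_div_cancel₀ _ hν.ne', add_sub_cancel, add_sub_cancel, smul_eq_mul]

theorem tendsto_integral_indicator_exp_neg_div_sq {f : ℝ → ℝ} {a b x₀ c : ℝ}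
    (hf : ContDiff ℝ 2 f) (hzero : f x₀ = 0) (hcrit : deriv f x₀ = 0) (ha : a < x₀) (hb : x₀ < b)
    (hc : 0 < c) (hfc : ∀ x ∈ Icc a b, c * (x - x₀) ^ 2 ≤ f x) :
    Tendsto (fun ν => ∫ t, (Ioc ((a - x₀) / ν) ((b - x₀) / ν)).indicator
        (fun t => Real.exp (-f (x₀ + ν * t) / ν ^ 2)) t)
      (𝓝[>] 0) (𝓝 (∫ t, Real.exp (-(deriv (deriv f) x₀ / 2) * t ^ 2))) := by
  refine tendsto_integral_filter_of_dominated_convergence (fun t => Real.exp (-c * t ^ 2))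
    (Eventually.of_forall fun ν => ?_) ?_ (integrable_exp_neg_mul_sq hc) ?_
  · exact (Continuous.aestronglyMeasurable (by fun_prop)).indicator measurableSet_Ioc
  · filter_upwards [self_mem_nhdsWithin] with ν (hν : 0 < ν)
    refine Eventually.of_forall fun t => ?_
    rw [norm_indicator_eq_indicator_norm]
    refine indicator_apply_le' (fun ht => ?_) fun _ => (Real.exp_pos _).le
    have hbound := hfc _ (Ioc_subset_Icc_self ((mem_Ioc_sub_div_iff hν).mp ht))
    rw [add_sub_cancel_left, mul_pow] at hbound
    rw [Real.norm_of_nonneg (Real.exp_pos _).le, Real.exp_le_exp, neg_div, neg_mul,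
      neg_le_neg_iff, le_div_iff₀ (by positivity)]
    linarith
  · refine Eventually.of_forall fun t => ?_
    have hline : Tendsto (fun ν : ℝ => x₀ + ν * t) (𝓝[>] 0) (𝓝 x₀) := by
      simpa using (((tendsto_id (x := 𝓝 (0 : ℝ))).mul_const t).const_add x₀).mono_left
        nhdsWithin_le_nhds
    have hmem : ∀ᶠ ν in 𝓝[>] 0, t ∈ Ioc ((a - x₀) / ν) ((b - x₀) / ν) := by
      filter_upwards [self_mem_nhdsWithin, hline.eventually (Ioo_mem_nhds ha hb)] with ν hν hx
      exact (mem_Ioc_sub_div_iff hν).mpr (Ioo_subset_Ioc_self hx)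
    rw [neg_mul]
    refine ((hf.tendsto_sub_div_sq hcrit t).mono_left (nhdsGT_le_nhdsNE 0)).neg.rexp.congr' ?_
    filter_upwards [hmem] with ν hν
    rw [indicator_of_mem hν, hzero, sub_zero, neg_div]

theorem stmt_9 (α β P₀ : ℝ) (h1 : α < P₀) (h2 : P₀ < β)
    (H : ℝ → ℝ) (hH : ContDiff ℝ 2 H) (hmin : H P₀ = 0)
    (hpos : ∀ p ∈ Icc α β, p ≠ P₀ → 0 < H p)
    (hH'' : 0 < deriv (deriv H) P₀) :
    Tendsto (fun ν : ℝ => ν⁻¹ * ∫ p in α..β, Real.exp (-H p / ν ^ 2))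
      (𝓝[>] 0) (𝓝 (Real.sqrt (2 * Real.pi / deriv (deriv H) P₀))) := by
  have hcrit : deriv H P₀ = 0 := by
    refine IsLocalMin.deriv_eq_zero ?_
    filter_upwards [Icc_mem_nhds h1 h2] with p hp
    rcases eq_or_ne p P₀ with rfl | hne
    · rfl
    · exact hmin ▸ (hpos p hp hne).le
  obtain ⟨c, hc, hHc⟩ := exists_pos_mul_sq_le_on_Icc (h1.trans h2) ⟨h1.le, h2.le⟩
    hH.continuous.continuousOn hpos (by positivity : 0 < deriv (deriv H) P₀ / 4)
    (by simpa [hmin] using hH.eventually_add_mul_sq_le hcrit hH'')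
  have hlim := tendsto_integral_indicator_exp_neg_div_sq hH hmin hcrit h1 h2 hc hHc
  rw [integral_gaussian, div_div_eq_mul_div, mul_comm] at hlim
  refine hlim.congr' ?_
  filter_upwards [self_mem_nhdsWithin] with ν hν
  exact (inv_mul_intervalIntegral_eq_integral_indicator (fun p => Real.exp (-H p / ν ^ 2))
    (h1.trans h2).le hν).symm
end

section
/- Let H : ℝ → ℝ be smooth, L-periodic, with σ > max H'. Define γ(p) = exp((-H(p)+σp)/ν²) and c = [ν²(γ(L) - γ(0))]^{-1} ∫₀^L γ(q) dq. Then the function u(p) = γ(p)^{-1}( c γ(0) + ν^{-2}∫₀^p γ(q) dq ) solves ν² u'(p) = (H'(p) - σ) u(p) + 1 on ℝ and is L-periodic, and c is the unique initial value u(0) for which the solution of this ODE is L-periodic. -/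
/-!
Multiplying the ODE by the integrating factor `γ` turns it into `ν² (γ u)' = γ`, so every solution
is `u = γ⁻¹ (C + ν⁻² ∫₀^p γ)` for a constant `C = γ(0) u(0)`. Periodicity of `H` makes `γ` quasi-periodic,
`γ (p + L) = K γ p` with `K = exp (σ L / ν²)`, and hence `∫₀^{p+L} γ = ∫₀^L γ + K ∫₀^p γ`. Comparing
`u (p + L)` with `u p` then reduces periodicity, at every single `p`, to the linear equation
`C (K - 1) = ν⁻² ∫₀^L γ`. Rolle's theorem gives a zero of `H'`, so `σ > 0` and `K > 1`: the equation has
exactly one solution, which is the stated `c`.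
-/

open MeasureTheory intervalIntegral

theorem pos_of_deriv_lt_of_periodic {H : ℝ → ℝ} {L σ : ℝ} (hL : 0 < L) (hH : Differentiable ℝ H)
    (hper : Function.Periodic H L) (hσ : ∀ p, deriv H p < σ) : 0 < σ := by
  have hHL : H 0 = H L := by simpa using (hper 0).symm
  obtain ⟨p, -, hp⟩ := exists_deriv_eq_zero hL hH.continuous.continuousOn hHL
  exact hp ▸ hσ p

theorem integral_add_period_of_mul_periodic {γ : ℝ → ℝ} {L K : ℝ} (hγ : Continuous γ)
    (hshift : ∀ p, γ (p + L) = K * γ p) (p : ℝ) :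
    ∫ q in (0:ℝ)..(p + L), γ q = (∫ q in (0:ℝ)..L, γ q) + K * ∫ q in (0:ℝ)..p, γ q := by
  have hcomp : ∫ q in L..(p + L), γ q = ∫ q in (0:ℝ)..p, γ (q + L) := by
    rw [integral_comp_add_right, zero_add]
  rw [← integral_add_adjacent_intervals (hγ.intervalIntegrable 0 L) (hγ.intervalIntegrable L _),
    hcomp]
  simp only [hshift, intervalIntegral.integral_const_mul]

theorem inv_mul_integral_add_period_eq_iff {γ : ℝ → ℝ} {L K C k : ℝ} (hγ : Continuous γ)
    (hne : ∀ p, γ p ≠ 0) (hK : K ≠ 0) (hshift : ∀ p, γ (p + L) = K * γ p) (p : ℝ) :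
    (γ (p + L))⁻¹ * (C + k * ∫ q in (0:ℝ)..(p + L), γ q)
        = (γ p)⁻¹ * (C + k * ∫ q in (0:ℝ)..p, γ q) ↔
      C * (K - 1) = k * ∫ q in (0:ℝ)..L, γ q := by
  rw [hshift, integral_add_period_of_mul_periodic hγ hshift, mul_inv, mul_comm K⁻¹, mul_assoc,
    mul_right_inj' (inv_ne_zero (hne p)), inv_mul_eq_iff_eq_mul₀ hK]
  constructor <;> intro h <;> linear_combination -h

theorem hasDerivAt_inv_mul_integral {γ a : ℝ → ℝ} {C k p : ℝ} (hγ : Continuous γ)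
    (hγ' : HasDerivAt γ (a p * γ p) p) (hp : γ p ≠ 0) :
    HasDerivAt (fun x => (γ x)⁻¹ * (C + k * ∫ q in (0:ℝ)..x, γ q))
      (-a p * ((γ p)⁻¹ * (C + k * ∫ q in (0:ℝ)..p, γ q)) + k) p := by
  have hF : HasDerivAt (fun x => ∫ q in (0:ℝ)..x, γ q) (γ p) p :=
    integral_hasDerivAt_right (hγ.intervalIntegrable 0 p) (hγ.stronglyMeasurableAtFilter _ _)
      hγ.continuousAt
  refine (HasDerivAt.mul (c := fun x => (γ x)⁻¹) (hγ'.inv hp)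
    ((hF.const_mul k).const_add C)).congr_deriv ?_
  field_simp

section IntegratingFactor

variable {H γ : ℝ → ℝ} {σ ν : ℝ}

theorem integratingFactor_hasDerivAt (hH : Differentiable ℝ H)
    (hγ : ∀ p, γ p = Real.exp ((-H p + σ * p) / ν ^ 2)) (p : ℝ) :
    HasDerivAt γ ((σ - deriv H p) / ν ^ 2 * γ p) p := by
  obtain rfl : γ = _ := funext hγ
  have hexponent : HasDerivAt (fun q => (-H q + σ * q) / ν ^ 2) ((σ - deriv H p) / ν ^ 2) p :=
    (((hH p).hasDerivAt.neg.add ((hasDerivAt_id p).const_mul σ)).div_const _).congr_deriv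
      (by ring)
  exact hexponent.exp.congr_deriv (mul_comm _ _)

theorem integratingFactor_add_period {L : ℝ} (hper : Function.Periodic H L)
    (hγ : ∀ p, γ p = Real.exp ((-H p + σ * p) / ν ^ 2)) (p : ℝ) :
    γ (p + L) = Real.exp (σ * L / ν ^ 2) * γ p := by
  rw [hγ, hγ, ← Real.exp_add, hper]
  ring_nf

end IntegratingFactor

theorem stmt_12 (L σ ν : ℝ) (hL : 0 < L) (hν : 0 < ν)
    (H : ℝ → ℝ) (hH : ContDiff ℝ 1 H) (hper : ∀ p, H (p + L) = H p)
    (hσ : ∀ p, deriv H p < σ)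
    (γ : ℝ → ℝ) (hγ : ∀ p, γ p = Real.exp ((-H p + σ * p) / ν ^ 2))
    (c : ℝ) (hc : c = (ν ^ 2 * (γ L - γ 0))⁻¹ * ∫ q in (0:ℝ)..L, γ q)
    (u : ℝ → ℝ)
    (hu : ∀ p, u p = (γ p)⁻¹ * (c * γ 0 + ν⁻¹ ^ 2 * ∫ q in (0:ℝ)..p, γ q)) :
    (∀ p, HasDerivAt u (((deriv H p - σ) * u p + 1) / ν ^ 2) p) ∧
      (∀ p, u (p + L) = u p) ∧
      ∀ c' : ℝ,
        (∀ p, (γ (p + L))⁻¹ * (c' * γ 0 + ν⁻¹ ^ 2 * ∫ q in (0:ℝ)..(p + L), γ q)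
            = (γ p)⁻¹ * (c' * γ 0 + ν⁻¹ ^ 2 * ∫ q in (0:ℝ)..p, γ q)) →
          c' = c := by
  have hHd : Differentiable ℝ H := hH.differentiable one_ne_zero
  have hγ' := integratingFactor_hasDerivAt hHd hγ
  have hγc : Continuous γ := continuous_iff_continuousAt.2 fun p => (hγ' p).continuousAt
  have hγne : ∀ p, γ p ≠ 0 := fun p => hγ p ▸ (Real.exp_pos _).ne'
  have hshift := integratingFactor_add_period hper hγ
  have hK : 1 < Real.exp (σ * L / ν ^ 2) := Real.one_lt_exp_iff.2 <| by
    have := pos_of_deriv_lt_of_periodic hL hHd hper hσ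
    positivity
  have hperiod := fun C => inv_mul_integral_add_period_eq_iff (C := C) (k := ν⁻¹ ^ 2) hγc hγne
    (Real.exp_pos _).ne' hshift
  have hfactor : γ 0 * (Real.exp (σ * L / ν ^ 2) - 1) ≠ 0 := mul_ne_zero (hγne 0) (by linarith)
  have hcK : c * γ 0 * (Real.exp (σ * L / ν ^ 2) - 1) = ν⁻¹ ^ 2 * ∫ q in (0:ℝ)..L, γ q := by
    rw [hc, show L = 0 + L by ring, hshift 0, zero_add]
    field_simp
    exact mul_div_cancel_left₀ _ hfactor
  refine ⟨fun p => ?_, fun p => ?_, fun c' h => ?_⟩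
  · have h := hasDerivAt_inv_mul_integral (a := fun p => (σ - deriv H p) / ν ^ 2) (C := c * γ 0)
      (k := ν⁻¹ ^ 2) hγc (hγ' p) (hγne p)
    rw [← funext hu, ← hu p] at h
    refine h.congr_deriv ?_
    field_simp
    ring
  · rw [hu, hu]
    exact (hperiod _ p).2 hcK
  · have hc' := (hperiod _ 0).1 (h 0)
    exact mul_right_cancel₀ hfactor (by linear_combination hc' - hcK)
end

section
/- Let u₀(p) = 1/(σ - H'(p)) where H is smooth, L-periodic, and σ > max H'. If u solves ν² u'(p) = (H'(p)-σ) u(p) + 1 and is L-periodic, then |(1/L)∫₀^L u(p) dp - (1/L)∫₀^L u₀(p) dp| ≤ Cν² for a constant C depending only on H and σ; in particular (1/L)∫₀^L u(p) dp → (1/L)∫₀^L dp/(σ - H'(p)) as ν → 0. -/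
open MeasureTheory intervalIntegral

theorem stmt_13 (L σ : ℝ) (hL : 0 < L)
    (H : ℝ → ℝ) (hH : ContDiff ℝ 3 H) (hper : ∀ p, H (p + L) = H p)
    (hσ : ∀ p, deriv H p < σ) :
    ∃ C : ℝ, ∀ ν : ℝ, 0 < ν → ν ≤ 1 → ∀ u : ℝ → ℝ,
      (∀ p, HasDerivAt u (((deriv H p - σ) * u p + 1) / ν ^ 2) p) →
      (∀ p, u (p + L) = u p) →
      |(1 / L) * (∫ p in (0:ℝ)..L, u p)
          - (1 / L) * ∫ p in (0:ℝ)..L, 1 / (σ - deriv H p)| ≤ C * ν ^ 2 := by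
  set D := deriv H with hDdef
  -- regularity of D
  have hD2 : ContDiff ℝ 2 D := by
    have : ContDiff ℝ (2+1) H := by exact_mod_cast hH
    exact (contDiff_succ_iff_deriv.mp this).2.2
  have hDcont : Continuous D := hD2.continuous
  have hD1 : Differentiable ℝ D ∧ Continuous (deriv D) := by
    have : ContDiff ℝ 1 D := hD2.of_le (by norm_num)
    exact contDiff_one_iff_deriv.mp this
  have hDdiff : Differentiable ℝ D := hD1.1
  have hD'cont : Continuous (deriv D) := hD1.2
  -- periodicity of D and deriv D
  have hDper : ∀ p, D (p + L) = D p := by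
    intro p
    have h1 : (fun x => H (x + L)) = H := funext hper
    calc D (p + L) = deriv (fun x => H (x + L)) p := (deriv_comp_add_const H L p).symm
      _ = D p := by rw [h1]
  have hD'per : ∀ p, deriv D (p + L) = deriv D p := by
    intro p
    have h1 : (fun x => D (x + L)) = D := funext hDper
    calc deriv D (p + L) = deriv (fun x => D (x + L)) p := (deriv_comp_add_const D L p).symm
      _ = deriv D p := by rw [h1]
  -- reduce any point to [0, L]
  have hreduce : ∀ (f : ℝ → ℝ), (∀ p, f (p + L) = f p) → ∀ p, ∃ q ∈ Set.Icc 0 L, f p = f q := by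
    intro f hf p
    have : Function.Periodic f L := hf
    obtain ⟨y, hy, hfy⟩ := this.exists_mem_Ico₀ hL p
    exact ⟨y, ⟨hy.1, le_of_lt hy.2⟩, hfy⟩
  -- δ : uniform lower bound for σ - D
  obtain ⟨q, hqmem, hqmin⟩ := isCompact_Icc.exists_isMinOn (Set.nonempty_Icc.mpr hL.le)
    ((continuous_const.sub hDcont).continuousOn (s := Set.Icc 0 L))
  set δ : ℝ := σ - D q with hδdef
  have hδpos : 0 < δ := sub_pos.mpr (hσ q)
  have hδall : ∀ p, δ ≤ σ - D p := by
    intro p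
    obtain ⟨y, hy, hfy⟩ := hreduce D hDper p
    rw [hfy]
    exact hqmin hy
  have hσDpos : ∀ p, 0 < σ - D p := fun p => lt_of_lt_of_le hδpos (hδall p)
  have hσDne : ∀ p, σ - D p ≠ 0 := fun p => (hσDpos p).ne'
  -- K : uniform bound on |deriv D|
  obtain ⟨r, hrmem, hrmax⟩ := isCompact_Icc.exists_isMaxOn (Set.nonempty_Icc.mpr hL.le)
    ((hD'cont.abs).continuousOn (s := Set.Icc 0 L))
  set K : ℝ := |deriv D r| with hKdef
  have hK0 : 0 ≤ K := abs_nonneg _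
  have hKall : ∀ p, |deriv D p| ≤ K := by
    intro p
    obtain ⟨y, hy, hfy⟩ := hreduce (fun x => |deriv D x|) (fun x => by simp [hD'per x]) p
    rw [hfy]
    exact hrmax hy
  -- the function g = 1/(σ - D) and its derivative
  set g : ℝ → ℝ := fun p => (σ - D p)⁻¹ with hgdef
  set g' : ℝ → ℝ := fun p => deriv D p / (σ - D p) ^ 2 with hg'def
  have hg : ∀ p, HasDerivAt g (g' p) p := by
    intro p
    have h1 : HasDerivAt (fun x => σ - D x) (0 - deriv D p) p :=
      (hasDerivAt_const p σ).sub (hDdiff p).hasDerivAt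
    have h2 := h1.inv (hσDne p)
    exact (by simpa [zero_sub, neg_div, neg_neg] using h2 : HasDerivAt (fun x => σ - D x)⁻¹ (deriv D p / (σ - D p) ^ 2) p)
  have hgcont : Continuous g := (continuous_const.sub hDcont).inv₀ hσDne
  have hg'cont : Continuous g' :=
    hD'cont.div ((continuous_const.sub hDcont).pow 2) (fun p => pow_ne_zero 2 (hσDne p))
  have hg'bound : ∀ p, |g' p| ≤ K / δ ^ 2 := by
    intro p
    have h1 : |g' p| = |deriv D p| / (σ - D p) ^ 2 := by
      rw [hg'def, abs_div, abs_of_pos (pow_pos (hσDpos p) 2)]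
    rw [h1]
    have h2 : δ ^ 2 ≤ (σ - D p) ^ 2 := by
      apply pow_le_pow_left₀ hδpos.le (hδall p)
    gcongr <;> first | exact hδpos | exact hKall p | exact hδall p
  -- the constant
  refine ⟨K / δ ^ 3, ?_⟩
  intro ν hν hν1 u hu huper
  have hν2 : (ν : ℝ) ^ 2 ≠ 0 := pow_ne_zero 2 hν.ne'
  have hudiff : Differentiable ℝ u := fun p => (hu p).differentiableAt
  have hucont : Continuous u := hudiff.continuous
  -- maximum principle : 0 < u ≤ 1/δ
  have hext : ∀ c : ℝ, (∀ p, u p ≤ u c ∨ ∀ p, u c ≤ u p) → True := fun _ _ => trivial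
  have hcrit : ∀ c : ℝ, (∀ p, u p ≤ u c) ∨ (∀ p, u c ≤ u p) → u c = (σ - D c)⁻¹ := by
    intro c hc
    have hloc : IsLocalExtr u c := by
      rcases hc with h | h
      · exact Or.inr (Filter.Eventually.of_forall h)
      · exact Or.inl (Filter.Eventually.of_forall h)
    have hz : ((D c - σ) * u c + 1) / ν ^ 2 = 0 := hloc.hasDerivAt_eq_zero (hu c)
    have hz2 : (D c - σ) * u c + 1 = 0 := by
      field_simp at hz
      linarith [hz]
    have hm : (σ - D c) * u c = 1 := by linear_combination -hz2
    exact eq_inv_of_mul_eq_one_right hm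
  obtain ⟨a, hamem, hamax⟩ := isCompact_Icc.exists_isMaxOn (Set.nonempty_Icc.mpr hL.le)
    (hucont.continuousOn (s := Set.Icc 0 L))
  obtain ⟨b, hbmem, hbmin⟩ := isCompact_Icc.exists_isMinOn (Set.nonempty_Icc.mpr hL.le)
    (hucont.continuousOn (s := Set.Icc 0 L))
  have hau : ∀ p, u p ≤ u a := by
    intro p
    obtain ⟨y, hy, hfy⟩ := hreduce u huper p
    rw [hfy]; exact hamax hy
  have hbu : ∀ p, u b ≤ u p := by
    intro p
    obtain ⟨y, hy, hfy⟩ := hreduce u huper p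
    rw [hfy]; exact hbmin hy
  have hua : u a = (σ - D a)⁻¹ := hcrit a (Or.inl hau)
  have hub : u b = (σ - D b)⁻¹ := hcrit b (Or.inr hbu)
  have hubound : ∀ p, |u p| ≤ 1 / δ := by
    intro p
    rw [abs_le]
    constructor
    · have h1 : 0 < u b := by rw [hub]; exact inv_pos.mpr (hσDpos b)
      have := hbu p
      have : 0 < u p := lt_of_lt_of_le h1 this
      have h2 : 0 < 1 / δ := by positivity
      linarith
    · have h1 : u a ≤ 1 / δ := by
        rw [hua, one_div]
        exact inv_anti₀ hδpos (hδall a)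
      exact le_trans (hau p) h1
  -- integrability
  have hDu_cont : Continuous (fun p => ((D p - σ) * u p + 1) / ν ^ 2) :=
    (((hDcont.sub continuous_const).mul hucont).add continuous_const).div_const _
  -- integration by parts
  have hparts : ∫ p in (0:ℝ)..L, g p * (((D p - σ) * u p + 1) / ν ^ 2)
      = g L * u L - g 0 * u 0 - ∫ p in (0:ℝ)..L, g' p * u p := by
    apply intervalIntegral.integral_mul_deriv_eq_deriv_mul_of_hasDerivAt
      (hgcont.continuousOn) (hucont.continuousOn)
      (fun x _ => hg x) (fun x _ => hu x)
      (hg'cont.intervalIntegrable _ _) (hDu_cont.intervalIntegrable _ _)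
  have hgL : g L = g 0 := by
    have := hDper 0
    simp only [zero_add] at this
    simp [hgdef, this]
  have huL : u L = u 0 := by
    have := huper 0
    simpa using this
  have hparts2 : ∫ p in (0:ℝ)..L, g p * (((D p - σ) * u p + 1) / ν ^ 2)
      = - ∫ p in (0:ℝ)..L, g' p * u p := by
    rw [hparts, hgL, huL]; ring
  -- pointwise identity
  have hkey : ∀ p, u p - g p = -(ν ^ 2) * (g p * (((D p - σ) * u p + 1) / ν ^ 2)) := by
    intro p
    have h := hσDne p
    field_simp [hgdef]
    have hg1 : g p * (σ - D p) = 1 := inv_mul_cancel₀ h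
    linear_combination (-(u p)) * hg1
  -- integral identity
  have hint : (∫ p in (0:ℝ)..L, u p) - (∫ p in (0:ℝ)..L, g p)
      = ν ^ 2 * ∫ p in (0:ℝ)..L, g' p * u p := by
    rw [← intervalIntegral.integral_sub (hucont.intervalIntegrable _ _)
      (hgcont.intervalIntegrable _ _)]
    calc ∫ p in (0:ℝ)..L, (u p - g p)
        = ∫ p in (0:ℝ)..L, -(ν ^ 2) * (g p * (((D p - σ) * u p + 1) / ν ^ 2)) := by
          apply intervalIntegral.integral_congr
          intro x _
          exact hkey x
      _ = -(ν ^ 2) * ∫ p in (0:ℝ)..L, g p * (((D p - σ) * u p + 1) / ν ^ 2) := by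
          rw [intervalIntegral.integral_const_mul]
      _ = ν ^ 2 * ∫ p in (0:ℝ)..L, g' p * u p := by
          rw [hparts2]; ring
  -- bound the integral of g' * u
  have hbnd : |∫ p in (0:ℝ)..L, g' p * u p| ≤ K / δ ^ 2 * (1 / δ) * L := by
    have h1 : ‖∫ p in (0:ℝ)..L, g' p * u p‖ ≤ K / δ ^ 2 * (1 / δ) * |L - 0| := by
      apply intervalIntegral.norm_integral_le_of_norm_le_const
      intro x _
      rw [Real.norm_eq_abs, abs_mul]
      exact mul_le_mul (hg'bound x) (hubound x) (abs_nonneg _) (by positivity)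
    rw [Real.norm_eq_abs] at h1
    rwa [sub_zero, abs_of_pos hL] at h1
  -- finish
  have hgeq : (∫ p in (0:ℝ)..L, 1 / (σ - D p)) = ∫ p in (0:ℝ)..L, g p := by
    apply intervalIntegral.integral_congr
    intro x _
    simp [hgdef, one_div]
  rw [hgeq, ← mul_sub, hint, abs_mul]
  have hL' : |1 / L| = 1 / L := abs_of_pos (by positivity)
  rw [hL', abs_mul, abs_pow, abs_of_pos hν]
  calc 1 / L * (ν ^ 2 * |∫ p in (0:ℝ)..L, g' p * u p|)
      ≤ 1 / L * (ν ^ 2 * (K / δ ^ 2 * (1 / δ) * L)) := by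
        apply mul_le_mul_of_nonneg_left _ (by positivity)
        apply mul_le_mul_of_nonneg_left hbnd (by positivity)
    _ = K / δ ^ 3 * ν ^ 2 := by field_simp
end
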